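/- Let γ(u) = [[u², u],[u, 1]] be the parabolic circle in ℚ³₊, so that γ̇(u) = [[2u, 1],[1, 0]] and ⟨γ̇(u), γ̇(u)⟩ = 1. Fix u ∈ ℝ. Then a Hermitian matrix V satisfies ⟨γ(u), V⟩ = 0, ⟨γ̇(u), V⟩ = 0 and ⟨V, V⟩ = 1 if and only if there exists α ∈ ℝ such that V = α·γ(u) + f₂ or V = α·γ(u) − f₂, where f₂ = [[0, i],[−i, 0]]. -/

import Mathlib

open Matrix

/-- The Lorentz inner product on 2×2 complex matrices, via determinant polarization. -/
noncomputable def ip (V W : Matrix (Fin 2) (Fin 2) ℂ) : ℂ :=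
  -(1 / 2) * ((V + W).det - V.det - W.det)

/-- The parabolic circle in the light cone. -/
noncomputable def γP (u : ℝ) : Matrix (Fin 2) (Fin 2) ℂ :=
  !![((u : ℂ)) ^ 2, (u : ℂ); (u : ℂ), 1]

/-- Its derivative. -/
noncomputable def γPdot (u : ℝ) : Matrix (Fin 2) (Fin 2) ℂ :=
  !![2 * (u : ℂ), 1; 1, 0]

/-- f₂ = [[0,i],[−i,0]]. -/
noncomputable def f2 : Matrix (Fin 2) (Fin 2) ℂ := !![0, Complex.I; -Complex.I, 0]

/-!
The Hermitian matrices orthogonal to both `γP u` and `γPdot u` form the plane spanned by the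
null vector `γP u` and the unit spacelike vector `f2`. As `γP u` is also orthogonal to `f2`,
`⟨α γP u + β f2, α γP u + β f2⟩ = β²`, so the unit vectors of that plane are exactly those
with `β = ±1`.
-/

lemma ip_fin_two_of (a b c d a' b' c' d' : ℂ) :
    ip !![a, b; c, d] !![a', b'; c', d'] = (b * c' + c * b' - a * d' - d * a') / 2 := by
  simp only [ip, of_add_of, cons_add_cons, empty_add_empty, det_fin_two_of]
  ring

lemma Matrix.IsHermitian.exists_eq_fin_two {V : Matrix (Fin 2) (Fin 2) ℂ} (hV : V.IsHermitian) :
    ∃ a d p q : ℝ, V = !![(a : ℂ), p + q * Complex.I; p - q * Complex.I, d] := by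
  refine ⟨(V 0 0).re, (V 1 1).re, (V 0 1).re, (V 0 1).im, ?_⟩
  have h00 := Complex.conj_eq_iff_re.mp (hV.apply 0 0)
  have h11 := Complex.conj_eq_iff_re.mp (hV.apply 1 1)
  have h10 : V 1 0 = starRingEnd ℂ (V 0 1) := (hV.apply 1 0).symm
  ext i j
  fin_cases i <;> fin_cases j
  · simp [h00]
  · simp [Complex.re_add_im]
  · simp [h10, Complex.ext_iff]
  · simp [h11]

lemma hasDerivAt_γP_apply (u : ℝ) (i j : Fin 2) :
    HasDerivAt (fun u' => γP u' i j) (γPdot u i j) u := by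
  have hofReal : HasDerivAt (fun u' : ℝ => (u' : ℂ)) 1 u := (hasDerivAt_id u).ofReal_comp
  fin_cases i <;> fin_cases j
  · simpa [γP, γPdot] using hofReal.fun_pow 2
  · simpa [γP, γPdot] using hofReal
  · simpa [γP, γPdot] using hofReal
  · simpa [γP, γPdot] using hasDerivAt_const u (1 : ℂ)

lemma ip_γPdot_self (u : ℝ) : ip (γPdot u) (γPdot u) = 1 := by
  rw [γPdot, ip_fin_two_of]
  ring

lemma smul_γP_add_smul_f2 (u α β : ℝ) :
    (α : ℂ) • γP u + (β : ℂ) • f2 =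
      !![(α * u ^ 2 : ℂ), α * u + β * Complex.I; α * u - β * Complex.I, α] := by
  ext i j
  fin_cases i <;> fin_cases j <;> simp [γP, f2, sub_eq_add_neg]

lemma isHermitian_and_ip_γP_and_ip_γPdot_iff (u : ℝ) (V : Matrix (Fin 2) (Fin 2) ℂ) :
    (V.IsHermitian ∧ ip (γP u) V = 0 ∧ ip (γPdot u) V = 0) ↔
      ∃ α β : ℝ, V = (α : ℂ) • γP u + (β : ℂ) • f2 := by
  constructor
  · rintro ⟨hV, h1, h2⟩
    obtain ⟨a, d, p, q, rfl⟩ := hV.exists_eq_fin_two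
    rw [γP, ip_fin_two_of] at h1
    rw [γPdot, ip_fin_two_of] at h2
    have hp : p = u * d := by exact_mod_cast (by linear_combination h2 : (p : ℂ) = u * d)
    have ha : a = u ^ 2 * d := by
      exact_mod_cast (by linear_combination -2 * h1 + 2 * u * h2 : (a : ℂ) = u ^ 2 * d)
    refine ⟨d, q, ?_⟩
    rw [smul_γP_add_smul_f2, ha, hp]
    push_cast
    ring_nf
  · rintro ⟨α, β, rfl⟩
    rw [smul_γP_add_smul_f2, γP, γPdot, ip_fin_two_of, ip_fin_two_of]
    refine ⟨?_, by ring, by ring⟩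
    ext i j
    fin_cases i <;> fin_cases j <;> simp [sub_eq_add_neg]

lemma ip_self_smul_γP_add_smul_f2 (u α β : ℝ) :
    ip ((α : ℂ) • γP u + (β : ℂ) • f2) ((α : ℂ) • γP u + (β : ℂ) • f2) = (β : ℂ) ^ 2 := by
  rw [smul_γP_add_smul_f2, ip_fin_two_of]
  linear_combination -(β : ℂ) ^ 2 * Complex.I_sq

theorem parabolic_circle_tangent_fields (u : ℝ) :
    (∀ i j : Fin 2, HasDerivAt (fun u' => γP u' i j) (γPdot u i j) u) ∧
    ip (γPdot u) (γPdot u) = 1 ∧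
    ∀ V : Matrix (Fin 2) (Fin 2) ℂ,
      (V.IsHermitian ∧ ip (γP u) V = 0 ∧ ip (γPdot u) V = 0 ∧ ip V V = 1)
      ↔ ∃ α : ℝ, V = (α : ℂ) • γP u + f2 ∨ V = (α : ℂ) • γP u - f2 := by
  refine ⟨hasDerivAt_γP_apply u, ip_γPdot_self u, fun V => ⟨?_, ?_⟩⟩
  · rintro ⟨hV, h1, h2, h3⟩
    obtain ⟨α, β, rfl⟩ := (isHermitian_and_ip_γP_and_ip_γPdot_iff u V).1 ⟨hV, h1, h2⟩
    rw [ip_self_smul_γP_add_smul_f2] at h3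
    obtain rfl | rfl := sq_eq_one_iff.1 (by exact_mod_cast h3 : β ^ 2 = 1)
    exacts [⟨α, .inl (by simp)⟩, ⟨α, .inr (by simp [sub_eq_add_neg])⟩]
  · rintro ⟨α, hV⟩
    obtain ⟨β, hβ, rfl⟩ : ∃ β : ℝ, β ^ 2 = 1 ∧ V = (α : ℂ) • γP u + (β : ℂ) • f2 := by
      rcases hV with rfl | rfl
      exacts [⟨1, by norm_num, by simp⟩, ⟨-1, by norm_num, by simp [sub_eq_add_neg]⟩]
    obtain ⟨hV, h1, h2⟩ := (isHermitian_and_ip_γP_and_ip_γPdot_iff u _).2 ⟨α, β, rfl⟩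
    exact ⟨hV, h1, h2, by rw [ip_self_smul_γP_add_smul_f2]; exact_mod_cast hβ⟩
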